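/- arXiv:1201.3463 — 4 statements merged into one kernel-verified Lean document; each statement's English description precedes it below -/
import Mathlib

section
/- For every pair (d1, d2) of positive integers such that d1 divides d2 or d2 divides d1, there exists a polynomial automorphism F = (F1, F2) of ℂ² with deg F1 = d1 and deg F2 = d2. -/
/-!
Composing the triangular automorphisms `(x, y) ↦ (x + y ^ a, y)` and `(x, y) ↦ (x, y + x ^ k)`
gives `(x + y ^ a, y + (x + y ^ a) ^ k)`, whose components have degrees `a` and `a * k`: since
`ℂ[x, y]` is a domain, `(x + y ^ a) ^ k` has degree `a * k`, which the summand `y` cannot lower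
once `a * k ≥ 2`. Exchanging the two components settles the case `d2 ∣ d1`.
-/

open MvPolynomial

/-- A polynomial map of ℂ², given by its two component polynomials. -/
abbrev PolyMap : Type := MvPolynomial (Fin 2) ℂ × MvPolynomial (Fin 2) ℂ

/-- Composition of polynomial maps: (F ∘ G). -/
noncomputable def pcomp (F G : PolyMap) : PolyMap :=
  (MvPolynomial.aeval ![G.1, G.2] F.1, MvPolynomial.aeval ![G.1, G.2] F.2)

/-- `F` is a polynomial automorphism of ℂ²: it has a polynomial inverse. -/
def IsPolyAut (F : PolyMap) : Prop :=
  ∃ G : PolyMap, pcomp F G = (MvPolynomial.X 0, MvPolynomial.X 1) ∧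
    pcomp G F = (MvPolynomial.X 0, MvPolynomial.X 1)

/-- Weighted degree with `wdeg x = w1`, `wdeg y = w2` (0 on the zero polynomial). -/
noncomputable def wdeg (w1 w2 : ℕ) (p : MvPolynomial (Fin 2) ℂ) : ℕ :=
  p.support.sup fun α => α 0 * w1 + α 1 * w2

/-- An affine automorphism: an automorphism both of whose components have total degree 1. -/
def IsAffineAut (F : PolyMap) : Prop :=
  IsPolyAut F ∧ F.1.totalDegree = 1 ∧ F.2.totalDegree = 1

/-- The triangular map (x, y) ↦ (x, y + f(x)). -/
noncomputable def lowerT (f : Polynomial ℂ) : PolyMap :=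
  (MvPolynomial.X 0,
   MvPolynomial.X 1 + Polynomial.aeval (MvPolynomial.X 0 : MvPolynomial (Fin 2) ℂ) f)

/-- The triangular map (x, y) ↦ (x + f(y), y). -/
noncomputable def upperT (f : Polynomial ℂ) : PolyMap :=
  (MvPolynomial.X 0 + Polynomial.aeval (MvPolynomial.X 1 : MvPolynomial (Fin 2) ℂ) f,
   MvPolynomial.X 1)

/-- `chain L1 f l = T_l ∘ ⋯ ∘ T_1 ∘ L1`, where `T_i = lowerT (f i)` for odd `i`
and `T_i = upperT (f i)` for even `i`. -/
noncomputable def chain (L1 : PolyMap) (f : ℕ → Polynomial ℂ) : ℕ → PolyMap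
  | 0 => L1
  | i + 1 => pcomp (if i % 2 = 0 then lowerT (f (i + 1)) else upperT (f (i + 1))) (chain L1 f i)

theorem pcomp_assoc (F G H : PolyMap) : pcomp (pcomp F G) H = pcomp F (pcomp G H) := by
  have hsubst :
      (fun i ↦ aeval ![H.1, H.2] (![G.1, G.2] i)) = ![(pcomp G H).1, (pcomp G H).2] := by
    funext i; fin_cases i <;> rfl
  simp only [pcomp, comp_aeval_apply, hsubst]

theorem pcomp_X_left (F : PolyMap) : pcomp (X 0, X 1) F = F := by
  simp [pcomp]

theorem IsPolyAut.comp {F G : PolyMap} (hF : IsPolyAut F) (hG : IsPolyAut G) :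
    IsPolyAut (pcomp F G) := by
  obtain ⟨F', hFF', hF'F⟩ := hF
  obtain ⟨G', hGG', hG'G⟩ := hG
  refine ⟨pcomp G' F', ?_, ?_⟩
  · rw [pcomp_assoc, ← pcomp_assoc G, hGG', pcomp_X_left, hFF']
  · rw [pcomp_assoc, ← pcomp_assoc F', hF'F, pcomp_X_left, hG'G]

theorem pcomp_lowerT (f : Polynomial ℂ) (H : PolyMap) :
    pcomp (lowerT f) H = (H.1, H.2 + Polynomial.aeval H.1 f) := by
  simp only [pcomp, lowerT, map_add, ← Polynomial.aeval_algHom_apply, aeval_X]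
  rfl

theorem pcomp_upperT (f : Polynomial ℂ) (H : PolyMap) :
    pcomp (upperT f) H = (H.1 + Polynomial.aeval H.2 f, H.2) := by
  simp only [pcomp, upperT, map_add, ← Polynomial.aeval_algHom_apply, aeval_X]
  rfl

theorem isPolyAut_lowerT (f : Polynomial ℂ) : IsPolyAut (lowerT f) :=
  ⟨lowerT (-f), by rw [pcomp_lowerT]; simp [lowerT], by rw [pcomp_lowerT]; simp [lowerT]⟩

theorem isPolyAut_upperT (f : Polynomial ℂ) : IsPolyAut (upperT f) :=
  ⟨upperT (-f), by rw [pcomp_upperT]; simp [upperT], by rw [pcomp_upperT]; simp [upperT]⟩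

theorem pcomp_swap (F : PolyMap) : pcomp (X 1, X 0) F = (F.2, F.1) := by
  simp [pcomp]

theorem IsPolyAut.swap {F : PolyMap} (hF : IsPolyAut F) : IsPolyAut (F.2, F.1) := by
  have hswap : IsPolyAut (X 1, X 0) := ⟨(X 1, X 0), pcomp_swap _, pcomp_swap _⟩
  simpa only [pcomp_swap] using hswap.comp hF

theorem MvPolynomial.totalDegree_pow_of_isDomain {σ R : Type*} [CommRing R] [IsDomain R]
    (p : MvPolynomial σ R) (n : ℕ) : (p ^ n).totalDegree = n * p.totalDegree := by
  rcases eq_or_ne p 0 with rfl | hp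
  · cases n <;> simp
  induction n with
  | zero => simp
  | succ n ih =>
    rw [pow_succ, totalDegree_mul_of_isDomain (pow_ne_zero n hp) hp, ih, Nat.succ_mul]

theorem MvPolynomial.totalDegree_X_add_X_pow {σ R : Type*} [CommSemiring R] [Nontrivial R]
    {i j : σ} (hij : i ≠ j) {n : ℕ} (hn : 0 < n) :
    (X i + X j ^ n : MvPolynomial σ R).totalDegree = n := by
  classical
  refine le_antisymm ((totalDegree_add _ _).trans (by simp; omega)) ?_
  have hcoeff : coeff (Finsupp.single j n) (X i + X j ^ n : MvPolynomial σ R) = 1 := by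
    simp [coeff_X, coeff_X_pow, Finsupp.single_eq_single_iff, hij]
  have hle := le_totalDegree (mem_support_iff.mpr (hcoeff.symm ▸ one_ne_zero))
  rwa [Finsupp.sum_single_index rfl] at hle

theorem exists_isPolyAut_totalDegree_mul (a k : ℕ) (ha : 0 < a) (hak : 2 ≤ a * k) :
    ∃ F : PolyMap, IsPolyAut F ∧ F.1.totalDegree = a ∧ F.2.totalDegree = a * k := by
  have hF : pcomp (lowerT (.X ^ k)) (upperT (.X ^ a)) =
      (X 0 + X 1 ^ a, X 1 + (X 0 + X 1 ^ a) ^ k) := by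
    simp [pcomp_lowerT, upperT]
  have hdeg₁ : (X 0 + X 1 ^ a : MvPolynomial (Fin 2) ℂ).totalDegree = a :=
    totalDegree_X_add_X_pow (by decide) ha
  refine ⟨_, hF ▸ (isPolyAut_lowerT _).comp (isPolyAut_upperT _), hdeg₁, ?_⟩
  have hdeg₂ : ((X 0 + X 1 ^ a) ^ k : MvPolynomial (Fin 2) ℂ).totalDegree = a * k := by
    rw [totalDegree_pow_of_isDomain, hdeg₁, mul_comm]
  rw [totalDegree_add_eq_right_of_totalDegree_lt (by rw [hdeg₂, totalDegree_X]; omega), hdeg₂]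

/-- For every pair of positive integers `(d1, d2)` with `d1 ∣ d2` or `d2 ∣ d1`, there is a
polynomial automorphism of ℂ² of bidegree `(d1, d2)`. -/
theorem stmt_2 (d1 d2 : ℕ) (hd1 : 0 < d1) (hd2 : 0 < d2) (hdvd : d1 ∣ d2 ∨ d2 ∣ d1) :
    ∃ F : PolyMap, IsPolyAut F ∧ F.1.totalDegree = d1 ∧ F.2.totalDegree = d2 := by
  wlog h : d1 ∣ d2 generalizing d1 d2
  · obtain ⟨F, hF, h₁, h₂⟩ := this d2 d1 hd2 hd1 hdvd.symm (hdvd.resolve_left h)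
    exact ⟨(F.2, F.1), hF.swap, h₂, h₁⟩
  obtain ⟨k, rfl⟩ := h
  rcases Nat.lt_or_ge (d1 * k) 2 with hlt | hge
  · obtain ⟨rfl, rfl⟩ := mul_eq_one.mp (show d1 * k = 1 by omega)
    exact ⟨(X 0, X 1), ⟨(X 0, X 1), pcomp_X_left _, pcomp_X_left _⟩,
      totalDegree_X _, totalDegree_X _⟩
  · exact exists_isPolyAut_totalDegree_mul d1 k hd1 hge
end

section
/- Let w = (w1, w2) ∈ ℕ₊² and let L be an affine automorphism of ℂ², i.e. L = (L1, L2) with deg L1 = deg L2 = 1 and L invertible. Then (deg_w L1, deg_w L2) ∈ {(w1, w2), (w2, w1), (max{w1,w2}, max{w1,w2})}. -/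
open MvPolynomial

/-! An affine polynomial `a + b x + c y` has weighted degree `max (w1 if b ≠ 0) (w2 if c ≠ 0)`,
and `b ≠ 0` exactly when `x` occurs in it. Each component of `L` is nonconstant, and since
`G ∘ L = id` for a polynomial `G`, each of `x`, `y` occurs in `L1` or `L2`. The bidegree is
then determined by which variables occur in which component, and every pattern compatible with
these two constraints gives one of the three listed pairs. -/

namespace MvPolynomial

variable {R σ : Type*} [CommSemiring R] {p : MvPolynomial σ R}

theorem eq_zero_or_exists_eq_single_of_mem_support_of_totalDegree_le_one
    (hp : p.totalDegree ≤ 1) {α : σ →₀ ℕ} (hα : α ∈ p.support) :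
    α = 0 ∨ ∃ i, α = Finsupp.single i 1 := by
  have hdeg : (α.sum fun _ e => e) ≤ 1 := (le_totalDegree hα).trans hp
  rcases Nat.le_one_iff_eq_zero_or_eq_one.mp hdeg with h | h
  · exact .inl (Finsupp.degree_eq_zero_iff α |>.mp h)
  · exact .inr ((Finsupp.sum_eq_one_iff α).mp h)

theorem mem_vars_iff_single_mem_support_of_totalDegree_le_one (hp : p.totalDegree ≤ 1)
    (i : σ) : i ∈ p.vars ↔ Finsupp.single i 1 ∈ p.support := by
  rw [mem_vars_iff_mem_support]
  constructor
  · rintro ⟨α, hα, hi⟩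
    rcases eq_zero_or_exists_eq_single_of_mem_support_of_totalDegree_le_one hp hα
      with rfl | ⟨k, rfl⟩
    · simp at hi
    · obtain rfl : i = k := by simpa using hi
      exact hα
  · exact fun h => ⟨_, h, by simp⟩

theorem vars_nonempty_of_totalDegree_ne_zero (hp : p.totalDegree ≠ 0) : p.vars.Nonempty := by
  rw [Finset.nonempty_iff_ne_empty, Ne, vars_eq_empty_iff_eq_C]
  exact fun h => hp (h ▸ totalDegree_C _)

theorem exists_mem_vars_of_aeval_eq_X [Nontrivial R] {τ : Type*} (f : τ → MvPolynomial σ R)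
    (φ : MvPolynomial τ R) {j : σ} (h : aeval f φ = X j) : ∃ i, j ∈ (f i).vars := by
  have hj : j ∈ (bind₁ f φ).vars := by rw [← aeval_eq_bind₁, h, vars_X]; simp
  obtain ⟨i, -, hi⟩ := mem_vars_bind₁ f φ hj
  exact ⟨i, hi⟩

end MvPolynomial

theorem IsPolyAut.mem_vars {F : PolyMap} (hF : IsPolyAut F) (j : Fin 2) :
    j ∈ F.1.vars ∨ j ∈ F.2.vars := by
  obtain ⟨G, -, hGF⟩ := hF
  have hG : ∀ k : Fin 2, aeval ![F.1, F.2] (![G.1, G.2] k) = X k := by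
    simp only [pcomp, Prod.mk.injEq] at hGF
    intro k; fin_cases k
    exacts [hGF.1, hGF.2]
  exact Fin.exists_fin_two.mp (exists_mem_vars_of_aeval_eq_X _ _ (hG j))

theorem wdeg_of_totalDegree_le_one (w1 w2 : ℕ) {p : MvPolynomial (Fin 2) ℂ}
    (hp : p.totalDegree ≤ 1) :
    wdeg w1 w2 p = (if 0 ∈ p.vars then w1 else 0) ⊔ (if 1 ∈ p.vars then w2 else 0) := by
  simp only [mem_vars_iff_single_mem_support_of_totalDegree_le_one hp]
  apply le_antisymm
  · refine Finset.sup_le fun α hα => ?_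
    rcases eq_zero_or_exists_eq_single_of_mem_support_of_totalDegree_le_one hp hα
      with rfl | ⟨k, rfl⟩
    · simp
    · fin_cases k
      · exact le_sup_of_le_left (by simp_all)
      · exact le_sup_of_le_right (by simp_all)
  · have hle : ∀ k, Finsupp.single k 1 ∈ p.support →
        Finsupp.single k 1 0 * w1 + Finsupp.single k 1 1 * w2 ≤ wdeg w1 w2 p :=
      fun k hk => Finset.le_sup (f := fun α : Fin 2 →₀ ℕ => α 0 * w1 + α 1 * w2) hk
    refine max_le ?_ ?_ <;> split_ifs with h
    · simpa using hle 0 h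
    · exact Nat.zero_le _
    · simpa using hle 1 h
    · exact Nat.zero_le _

theorem stmt_3_general (w1 w2 : ℕ) (L : PolyMap) (hL : IsAffineAut L) :
    (wdeg w1 w2 L.1, wdeg w1 w2 L.2) = (w1, w2) ∨
    (wdeg w1 w2 L.1, wdeg w1 w2 L.2) = (w2, w1) ∨
    (wdeg w1 w2 L.1, wdeg w1 w2 L.2) = (max w1 w2, max w1 w2) := by
  obtain ⟨hL, h1, h2⟩ := hL
  have hcol0 := hL.mem_vars 0
  have hcol1 := hL.mem_vars 1
  have hrow1 := Fin.exists_fin_two.mp (vars_nonempty_of_totalDegree_ne_zero (h1 ▸ one_ne_zero))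
  have hrow2 := Fin.exists_fin_two.mp (vars_nonempty_of_totalDegree_ne_zero (h2 ▸ one_ne_zero))
  rw [wdeg_of_totalDegree_le_one w1 w2 h1.le, wdeg_of_totalDegree_le_one w1 w2 h2.le]
  by_cases (0 : Fin 2) ∈ L.1.vars <;> by_cases (1 : Fin 2) ∈ L.1.vars <;>
    by_cases (0 : Fin 2) ∈ L.2.vars <;> by_cases (1 : Fin 2) ∈ L.2.vars <;>
    simp_all <;> omega

/-- The weighted bidegree of an affine automorphism of ℂ² is `(w1, w2)`, `(w2, w1)`
or `(max {w1, w2}, max {w1, w2})`. -/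
theorem stmt_3 (w1 w2 : ℕ) (hw1 : 0 < w1) (hw2 : 0 < w2) (L : PolyMap) (hL : IsAffineAut L) :
    (wdeg w1 w2 L.1, wdeg w1 w2 L.2) = (w1, w2) ∨
    (wdeg w1 w2 L.1, wdeg w1 w2 L.2) = (w2, w1) ∨
    (wdeg w1 w2 L.1, wdeg w1 w2 L.2) = (max w1 w2, max w1 w2) :=
  stmt_3_general w1 w2 L hL
end

section
/- Let w = (w1, w2) ∈ ℕ₊² and let F = (F1, F2) be a polynomial automorphism of ℂ² of length at least 2, i.e. F = L2 ∘ T_l ∘ ⋯ ∘ T_1 ∘ L1 with l ≥ 2, where L1, L2 are affine automorphisms and the T_i are alternately of the forms (x,y) ↦ (x, y + f_i(x)) and (x,y) ↦ (x + f_i(y), y) with deg f_i > 1. Then (deg_w F1, deg_w F2) belongs to {(d1,d2) ∈ (w1ℕ₊)² : min{d1,d2} ≥ max{w1,w2} and (d1 | d2 or d2 | d1)} ∪ {(d1,d2) ∈ (w2ℕ₊)² : min{d1,d2} ≥ max{w1,w2} and (d1 | d2 or d2 | d1)}. -/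
open MvPolynomial

/-!
Along the chain, the component modified last has the larger weighted degree `E`; this degree is
at least `max w1 w2` and a multiple of `w1` or `w2`. After the first triangular step this holds
because the components of an affine automorphism have weighted degree `w1` or `w2`, together involve
both variables, and `v + g(u)` cannot cancel: when `deg_w v = deg g · deg_w u`, the variable
carrying `deg_w v` is too heavy to occur in `u`. Each later step multiplies `E` by `deg f_i ≥ 2`
and demotes the previous leading component, so the two final degrees are `E` and `deg f_l · E`.
Since they differ, each component of `L2 ∘ ⋯` has one of these two degrees.
-/

open Finsupp

theorem Finsupp.eq_zero_or_eq_single_of_degree_le_one {σ : Type*} {α : σ →₀ ℕ}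
    (h : α.degree ≤ 1) : α = 0 ∨ ∃ i, α = single i 1 := by
  rcases Nat.le_one_iff_eq_zero_or_eq_one.mp h with h | h
  · exact Or.inl ((degree_eq_zero_iff α).mp h)
  · exact Or.inr ((sum_eq_one_iff α).mp h)

namespace MvPolynomial

variable {σ R : Type*} [CommSemiring R] (w : σ → ℕ)

theorem weightedTotalDegree_add_le (p q : MvPolynomial σ R) :
    weightedTotalDegree w (p + q) ≤ max (weightedTotalDegree w p) (weightedTotalDegree w q) := by
  classical
  exact (Finset.sup_mono (support_add (p := p) (q := q))).trans_eq Finset.sup_union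

theorem weightedTotalDegree_mul_le (p q : MvPolynomial σ R) :
    weightedTotalDegree w (p * q) ≤ weightedTotalDegree w p + weightedTotalDegree w q := by
  classical
  refine Finset.sup_le fun α hα => ?_
  obtain ⟨β, hβ, γ, hγ, rfl⟩ := Finset.mem_add.mp (support_mul p q hα)
  rw [map_add]
  exact add_le_add (le_weightedTotalDegree w hβ) (le_weightedTotalDegree w hγ)

theorem weightedTotalDegree_C (c : R) : weightedTotalDegree w (C c : MvPolynomial σ R) = 0 := by
  classical
  refine Nat.eq_zero_of_le_zero (Finset.sup_le fun α hα => ?_)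
  rw [Finset.mem_singleton.mp (support_monomial_subset hα), map_zero]

variable {w}

theorem exists_weight_eq_weightedTotalDegree {p : MvPolynomial σ R} (hp : p ≠ 0) :
    ∃ α ∈ p.support, weight w α = weightedTotalDegree w p := by
  obtain ⟨α, hα, h⟩ := Finset.exists_mem_eq_sup _ (support_nonempty.mpr hp) (weight w)
  exact ⟨α, hα, h.symm⟩

theorem weightedTotalDegree_add_of_lt {p q : MvPolynomial σ R}
    (h : weightedTotalDegree w q < weightedTotalDegree w p) :
    weightedTotalDegree w (p + q) = weightedTotalDegree w p := by
  have hp : p ≠ 0 := by rintro rfl; simp [weightedTotalDegree_zero] at h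
  obtain ⟨α, hα, hαw⟩ := exists_weight_eq_weightedTotalDegree (w := w) hp
  have hqα : coeff α q = 0 := by
    by_contra hq
    exact (le_weightedTotalDegree w (mem_support_iff.mpr hq)).not_gt (hαw ▸ h)
  refine le_antisymm ((weightedTotalDegree_add_le w p q).trans (by omega)) ?_
  rw [← hαw]
  exact le_weightedTotalDegree w (by simpa [hqα] using hα)

theorem weightedTotalDegree_mul [NoZeroDivisors R] {p q : MvPolynomial σ R} (hp : p ≠ 0)
    (hq : q ≠ 0) :
    weightedTotalDegree w (p * q) = weightedTotalDegree w p + weightedTotalDegree w q := by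
  classical
  refine le_antisymm (weightedTotalDegree_mul_le w p q) ?_
  obtain ⟨a, ha, hap⟩ := exists_weight_eq_weightedTotalDegree (w := w) hp
  obtain ⟨b, hb, hbq⟩ := exists_weight_eq_weightedTotalDegree (w := w) hq
  obtain ⟨a, ha, b, hb, huniq⟩ := UniqueSums.uniqueAdd_of_nonempty
    (A := {α ∈ p.support | weight w α = weightedTotalDegree w p})
    (B := {β ∈ q.support | weight w β = weightedTotalDegree w q})
    ⟨a, Finset.mem_filter.mpr ⟨ha, hap⟩⟩ ⟨b, Finset.mem_filter.mpr ⟨hb, hbq⟩⟩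
  rw [Finset.mem_filter] at ha hb
  have hmax : UniqueAdd (p.support.image (weight w)) (q.support.image (weight w))
      (weightedTotalDegree w p) (weightedTotalDegree w q) := by
    intro x y hx hy hxy
    obtain ⟨α, hα, rfl⟩ := Finset.mem_image.mp hx
    obtain ⟨β, hβ, rfl⟩ := Finset.mem_image.mp hy
    have := le_weightedTotalDegree w hα
    have := le_weightedTotalDegree w hβ
    omega
  have huniq' : UniqueAdd p.support q.support a b :=
    UniqueAdd.of_image_filter (weight w).toAddHom ha.2 hb.2 hmax huniq
  have hcoeff : coeff (a + b) (p * q) ≠ 0 := by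
    rw [coeff, AddMonoidAlgebra.coeff_mul_add_of_uniqueAdd huniq']
    exact mul_ne_zero (mem_support_iff.mp ha.1) (mem_support_iff.mp hb.1)
  calc weightedTotalDegree w p + weightedTotalDegree w q = weight w (a + b) := by
        rw [map_add, ha.2, hb.2]
    _ ≤ _ := le_weightedTotalDegree w (mem_support_iff.mpr hcoeff)

theorem weightedTotalDegree_C_mul [NoZeroDivisors R] {a : R} (ha : a ≠ 0)
    (p : MvPolynomial σ R) :
    weightedTotalDegree w (C a * p) = weightedTotalDegree w p := by
  rcases eq_or_ne p 0 with rfl | hp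
  · rw [mul_zero]
  · rw [weightedTotalDegree_mul (C_ne_zero.mpr ha) hp, weightedTotalDegree_C, zero_add]

theorem weightedTotalDegree_pow [NoZeroDivisors R] {p : MvPolynomial σ R} (hp : p ≠ 0)
    (n : ℕ) :
    weightedTotalDegree w (p ^ n) = n * weightedTotalDegree w p := by
  induction n with
  | zero => simpa using weightedTotalDegree_C w (1 : R)
  | succ n ih => rw [pow_succ, weightedTotalDegree_mul (pow_ne_zero n hp) hp, ih, add_one_mul]

variable (w) in
theorem weightedTotalDegree_pow_le (p : MvPolynomial σ R) (n : ℕ) :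
    weightedTotalDegree w (p ^ n) ≤ n * weightedTotalDegree w p := by
  induction n with
  | zero => simpa using (weightedTotalDegree_C w (1 : R)).le
  | succ n ih =>
    rw [pow_succ, add_one_mul]
    exact (weightedTotalDegree_mul_le w _ _).trans (by omega)

variable (w) in
theorem weightedTotalDegree_aeval_le (p : MvPolynomial σ R) (g : Polynomial R) :
    weightedTotalDegree w (Polynomial.aeval p g) ≤ g.natDegree * weightedTotalDegree w p := by
  rw [Polynomial.aeval_eq_sum_range]
  refine Finset.sum_induction _ (weightedTotalDegree w · ≤ _)
    (fun q r hq hr => (weightedTotalDegree_add_le w q r).trans (max_le hq hr))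
    (by rw [weightedTotalDegree_zero]; exact Nat.zero_le _) fun i hi => ?_
  rw [smul_eq_C_mul]
  refine (weightedTotalDegree_mul_le w _ _).trans ?_
  rw [weightedTotalDegree_C, zero_add]
  exact (weightedTotalDegree_pow_le w p i).trans
    (Nat.mul_le_mul_right _ (Nat.lt_succ_iff.mp (Finset.mem_range.mp hi)))

theorem weightedTotalDegree_aeval [NoZeroDivisors R] {p : MvPolynomial σ R}
    (hp : 0 < weightedTotalDegree w p) {g : Polynomial R} (hg : 0 < g.natDegree) :
    weightedTotalDegree w (Polynomial.aeval p g) = g.natDegree * weightedTotalDegree w p := by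
  have hp0 : p ≠ 0 := by rintro rfl; simp [weightedTotalDegree_zero] at hp
  have hg0 : g.leadingCoeff ≠ 0 :=
    Polynomial.leadingCoeff_ne_zero.mpr (Polynomial.ne_zero_of_natDegree_gt hg)
  have hlead : weightedTotalDegree w (C g.leadingCoeff * p ^ g.natDegree) =
      g.natDegree * weightedTotalDegree w p := by
    rw [weightedTotalDegree_C_mul hg0, weightedTotalDegree_pow hp0]
  have hrest : weightedTotalDegree w (Polynomial.aeval p g.eraseLead) <
      g.natDegree * weightedTotalDegree w p :=
    (weightedTotalDegree_aeval_le w p _).trans_lt (Nat.mul_lt_mul_of_lt_of_le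
      ((Polynomial.eraseLead_natDegree_le g).trans_lt (Nat.sub_one_lt_of_lt hg)) le_rfl hp)
  conv_lhs => rw [← g.eraseLead_add_C_mul_X_pow]
  rw [map_add, map_mul, map_pow, Polynomial.aeval_C, Polynomial.aeval_X, algebraMap_eq, add_comm,
    weightedTotalDegree_add_of_lt (hlead ▸ hrest), hlead]

theorem weightedTotalDegree_add_aeval_of_lt [NoZeroDivisors R] {B O : MvPolynomial σ R}
    (h : weightedTotalDegree w O < weightedTotalDegree w B) {g : Polynomial R}
    (hg : 0 < g.natDegree) :
    weightedTotalDegree w (O + Polynomial.aeval B g) = g.natDegree * weightedTotalDegree w B := by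
  have haev := weightedTotalDegree_aeval (w := w) (h.trans_le' (Nat.zero_le _)) hg
  rw [add_comm, weightedTotalDegree_add_of_lt (haev ▸ h.trans_le (Nat.le_mul_of_pos_left _ hg)),
    haev]

theorem le_weightedTotalDegree_of_mem_vars {p : MvPolynomial σ R} {i : σ} (h : i ∈ p.vars) :
    w i ≤ weightedTotalDegree w p := by
  obtain ⟨α, hα, hi⟩ := (mem_vars_iff_mem_support i).mp h
  exact (le_weight_of_ne_zero' w (Finsupp.mem_support_iff.mp hi)).trans
    (le_weightedTotalDegree w hα)

theorem coeff_single_aeval_eq_zero {u : MvPolynomial σ R} {k : σ} (hk : k ∉ u.vars)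
    (g : Polynomial R) : coeff (single k 1) (Polynomial.aeval u g) = 0 := by
  have hmem : Polynomial.aeval u g ∈ supported R (u.vars : Set σ) :=
    Algebra.adjoin_le (Set.singleton_subset_iff.mpr (mem_supported.mpr subset_rfl))
      (Polynomial.aeval_mem_adjoin_singleton R u)
  by_contra hne
  have hk' : k ∈ (Polynomial.aeval u g).vars :=
    (mem_vars_iff_mem_support k).mpr ⟨_, mem_support_iff.mpr hne, by simp⟩
  exact hk (mem_supported.mp hmem hk')

theorem exists_coeff_single_ne_zero_of_totalDegree_eq_one {p : MvPolynomial σ R}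
    (hp : p.totalDegree = 1) : ∃ i, coeff (single i 1) p ≠ 0 := by
  have hp0 : p ≠ 0 := by rintro rfl; simp at hp
  obtain ⟨α, hα, hαdeg⟩ :=
    Finset.exists_mem_eq_sup _ (support_nonempty.mpr hp0) Finsupp.degree
  obtain ⟨i, rfl⟩ := (sum_eq_one_iff α).mp (hαdeg.symm.trans hp)
  exact ⟨i, mem_support_iff.mp hα⟩

theorem exists_weightedTotalDegree_eq_of_totalDegree_eq_one {p : MvPolynomial σ R}
    (hp : p.totalDegree = 1) :
    ∃ i, coeff (single i 1) p ≠ 0 ∧ weightedTotalDegree w p = w i := by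
  have hp0 : p ≠ 0 := by rintro rfl; simp at hp
  obtain ⟨α, hα, hαw⟩ := exists_weight_eq_weightedTotalDegree (w := w) hp0
  rcases Finsupp.eq_zero_or_eq_single_of_degree_le_one (hp ▸ le_totalDegree hα)
    with rfl | ⟨j, rfl⟩
  · obtain ⟨i, hi⟩ := exists_coeff_single_ne_zero_of_totalDegree_eq_one hp
    have := le_weightedTotalDegree w (mem_support_iff.mpr hi)
    rw [weight_single, one_smul, ← hαw, map_zero] at this
    rw [← hαw, map_zero]
    exact ⟨i, hi, by omega⟩
  · exact ⟨j, mem_support_iff.mp hα, by rw [← hαw, weight_single, one_smul]⟩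

theorem eq_C_add_sum_of_totalDegree_le_one [Fintype σ] {p : MvPolynomial σ R}
    (hp : p.totalDegree ≤ 1) : p = C (coeff 0 p) + ∑ i, C (coeff (single i 1) p) * X i := by
  classical
  ext α
  simp only [coeff_add, coeff_C, coeff_sum, coeff_C_mul, coeff_X, mul_ite, mul_one, mul_zero]
  by_cases hα : α.degree ≤ 1
  · rcases Finsupp.eq_zero_or_eq_single_of_degree_le_one hα with rfl | ⟨j, rfl⟩
    · simp
    · simp [Finsupp.single_left_inj one_ne_zero, eq_comm (a := (0 : σ →₀ ℕ))]
  · have h0 : (0 : σ →₀ ℕ) ≠ α := by rintro rfl; simp at hα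
    have hsingle : ∀ i, single i 1 ≠ α := by rintro i rfl; simp at hα
    rw [coeff_eq_zero_of_totalDegree_lt (hp.trans_lt (not_le.mp hα))]
    simp [h0, hsingle]

theorem weightedTotalDegree_add_aeval_of_totalDegree_eq_one [NoZeroDivisors R] (hw : ∀ i, 0 < w i)
    {u v : MvPolynomial σ R} (hu : u.totalDegree = 1) (hv : v.totalDegree = 1) {g : Polynomial R}
    (hg : 1 < g.natDegree) :
    weightedTotalDegree w (v + Polynomial.aeval u g) =
      max (weightedTotalDegree w v) (g.natDegree * weightedTotalDegree w u) := by
  obtain ⟨j, -, hju⟩ := exists_weightedTotalDegree_eq_of_totalDegree_eq_one (w := w) hu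
  obtain ⟨k, hkv, hkv'⟩ := exists_weightedTotalDegree_eq_of_totalDegree_eq_one (w := w) hv
  have hupos : 0 < weightedTotalDegree w u := hju ▸ hw j
  have haev := weightedTotalDegree_aeval (w := w) hupos (g := g) (by omega)
  rcases lt_trichotomy (weightedTotalDegree w v) (g.natDegree * weightedTotalDegree w u)
    with h | h | h
  · rw [add_comm, weightedTotalDegree_add_of_lt (haev ▸ h), haev, max_eq_right h.le]
  · refine le_antisymm ((weightedTotalDegree_add_le w _ _).trans (by rw [haev, h])) ?_
    -- `X k` carries the weighted degree of `v`, and is too heavy to occur in `u`, so it survives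
    have hku : k ∉ u.vars := fun hk => by
      have := le_weightedTotalDegree_of_mem_vars (w := w) hk
      have : weightedTotalDegree w u < g.natDegree * weightedTotalDegree w u :=
        lt_mul_left hupos hg
      omega
    have hcoeff : coeff (single k 1) (v + Polynomial.aeval u g) ≠ 0 := by
      rwa [coeff_add, coeff_single_aeval_eq_zero hku, add_zero]
    rw [← h, max_self, hkv', ← one_smul ℕ (w k), ← weight_single]
    exact le_weightedTotalDegree w (mem_support_iff.mpr hcoeff)
  · rw [weightedTotalDegree_add_of_lt (haev ▸ h), max_eq_left h.le]

theorem weightedTotalDegree_C_add_C_mul_add_C_mul [NoZeroDivisors R] {P Q : MvPolynomial σ R}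
    (hPQ : weightedTotalDegree w Q < weightedTotalDegree w P) (hQ : 0 < weightedTotalDegree w Q)
    {a b : R} (hab : a ≠ 0 ∨ b ≠ 0) (c : R) :
    weightedTotalDegree w (C c + (C a * P + C b * Q)) = weightedTotalDegree w P ∨
      weightedTotalDegree w (C c + (C a * P + C b * Q)) = weightedTotalDegree w Q := by
  rcases eq_or_ne a 0 with rfl | ha
  · have hb := hab.resolve_left (not_not.mpr rfl)
    right
    rw [C_0, zero_mul, zero_add, add_comm, weightedTotalDegree_add_of_lt,
      weightedTotalDegree_C_mul hb]
    rwa [weightedTotalDegree_C, weightedTotalDegree_C_mul hb]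
  · left
    have hrest : weightedTotalDegree w (C c + C b * Q) < weightedTotalDegree w P := by
      refine (weightedTotalDegree_add_le w _ _).trans_lt (max_lt ?_ ?_)
      · rw [weightedTotalDegree_C]; omega
      · refine ((weightedTotalDegree_mul_le w _ _).trans ?_).trans_lt hPQ
        rw [weightedTotalDegree_C, zero_add]
    rw [add_left_comm, weightedTotalDegree_add_of_lt (by rwa [weightedTotalDegree_C_mul ha]),
      weightedTotalDegree_C_mul ha]

theorem weightedTotalDegree_aeval_of_totalDegree_eq_one [NoZeroDivisors R] {τ : Type*}
    {w : τ → ℕ} {p : MvPolynomial (Fin 2) R} (hp : p.totalDegree = 1) {P Q : MvPolynomial τ R}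
    (hP : 0 < weightedTotalDegree w P) (hQ : 0 < weightedTotalDegree w Q)
    (hPQ : weightedTotalDegree w P ≠ weightedTotalDegree w Q) :
    weightedTotalDegree w (aeval ![P, Q] p) = weightedTotalDegree w P ∨
      weightedTotalDegree w (aeval ![P, Q] p) = weightedTotalDegree w Q := by
  obtain ⟨i, hi⟩ := exists_coeff_single_ne_zero_of_totalDegree_eq_one hp
  have hab : coeff (single 0 1) p ≠ 0 ∨ coeff (single 1 1) p ≠ 0 := by
    fin_cases i
    exacts [Or.inl hi, Or.inr hi]
  rw [eq_C_add_sum_of_totalDegree_le_one hp.le]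
  simp only [map_add, map_mul, aeval_C, aeval_X, Fin.sum_univ_two, algebraMap_eq,
    Matrix.cons_val_zero, Matrix.cons_val_one]
  rcases hPQ.lt_or_gt with h | h
  · rw [add_comm (C _ * P)]
    exact (weightedTotalDegree_C_add_C_mul_add_C_mul h hP hab.symm _).symm
  · exact weightedTotalDegree_C_add_C_mul_add_C_mul h hQ hab _

end MvPolynomial

theorem IsPolyAut.mem_vars_fst_or_mem_vars_snd {L : PolyMap} (hL : IsPolyAut L) (i : Fin 2) :
    i ∈ L.1.vars ∨ i ∈ L.2.vars := by
  obtain ⟨G, -, hGL⟩ := hL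
  obtain ⟨q, hq⟩ : ∃ q, aeval ![L.1, L.2] q = X i := by
    fin_cases i
    exacts [⟨G.1, congrArg Prod.fst hGL⟩, ⟨G.2, congrArg Prod.snd hGL⟩]
  have hi : i ∈ (X i : MvPolynomial (Fin 2) ℂ).vars := by simp [vars_X]
  rw [← hq, aeval_eq_bind₁] at hi
  obtain ⟨j, -, hj⟩ := mem_vars_bind₁ _ _ hi
  fin_cases j
  exacts [Or.inl hj, Or.inr hj]

section ChainInvariant

variable {σ R : Type*} [CommSemiring R] (w : σ → ℕ)

def ChainInvariant (c : MvPolynomial σ R × MvPolynomial σ R) : Prop :=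
  weightedTotalDegree w c.2 < weightedTotalDegree w c.1 ∧
    (∀ j, w j ≤ weightedTotalDegree w c.1) ∧ ∃ j, w j ∣ weightedTotalDegree w c.1

variable {w}

theorem ChainInvariant.step [NoZeroDivisors R] {c : MvPolynomial σ R × MvPolynomial σ R}
    (hc : ChainInvariant w c) {g : Polynomial R} (hg : 1 < g.natDegree) :
    ChainInvariant w (c.2 + Polynomial.aeval c.1 g, c.1) := by
  obtain ⟨hlt, hge, j, hj⟩ := hc
  have hdeg := weightedTotalDegree_add_aeval_of_lt hlt (g := g) (by omega)
  refine ⟨?_, fun i => (hge i).trans ?_, j, ?_⟩ <;> simp only [hdeg]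
  · exact lt_mul_left (hlt.trans_le' (Nat.zero_le _)) hg
  · exact Nat.le_mul_of_pos_left _ (by omega)
  · exact hj.mul_left _

end ChainInvariant

theorem chainInvariant_affine {w : Fin 2 → ℕ} (hw : ∀ i, 0 < w i) {L : PolyMap}
    (hL : IsAffineAut L) {g : Polynomial ℂ} (hg : 1 < g.natDegree) :
    ChainInvariant w (L.2 + Polynomial.aeval L.1 g, L.1) := by
  obtain ⟨hLaut, hL1, hL2⟩ := hL
  obtain ⟨j, -, hj⟩ := exists_weightedTotalDegree_eq_of_totalDegree_eq_one (w := w) hL1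
  obtain ⟨k, -, hk⟩ := exists_weightedTotalDegree_eq_of_totalDegree_eq_one (w := w) hL2
  have hdeg := weightedTotalDegree_add_aeval_of_totalDegree_eq_one hw hL1 hL2 hg
  have hlt : weightedTotalDegree w L.1 < g.natDegree * weightedTotalDegree w L.1 :=
    lt_mul_left (hj ▸ hw j) hg
  refine ⟨?_, fun i => ?_, ?_⟩ <;> simp only [hdeg]
  · exact lt_max_of_lt_right hlt
  · rcases hLaut.mem_vars_fst_or_mem_vars_snd i with hi | hi
    · exact le_max_of_le_right ((le_weightedTotalDegree_of_mem_vars hi).trans hlt.le)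
    · exact le_max_of_le_left (le_weightedTotalDegree_of_mem_vars hi)
  · rcases max_choice (weightedTotalDegree w L.2) (g.natDegree * weightedTotalDegree w L.1)
      with h | h <;> rw [h]
    · exact ⟨k, hk ▸ dvd_rfl⟩
    · exact ⟨j, hj ▸ dvd_mul_left _ _⟩

theorem pcomp_lowerT_s7 (g : Polynomial ℂ) (G : PolyMap) :
    pcomp (lowerT g) G = (G.1, G.2 + Polynomial.aeval G.1 g) := by
  simp [pcomp, lowerT, ← Polynomial.aeval_algHom_apply]

theorem pcomp_upperT_s7 (g : Polynomial ℂ) (G : PolyMap) :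
    pcomp (upperT g) G = (G.1 + Polynomial.aeval G.2 g, G.2) := by
  simp [pcomp, upperT, ← Polynomial.aeval_algHom_apply]

/-- `chain L1 f i` with its components ordered so that the one modified last comes first. -/
noncomputable def orientedChain (L1 : PolyMap) (f : ℕ → Polynomial ℂ) : ℕ → PolyMap
  | 0 => L1
  | i + 1 => ((orientedChain L1 f i).2 + Polynomial.aeval (orientedChain L1 f i).1 (f (i + 1)),
      (orientedChain L1 f i).1)

theorem chain_eq_orientedChain (L1 : PolyMap) (f : ℕ → Polynomial ℂ) (i : ℕ) :
    chain L1 f i = if i % 2 = 0 then orientedChain L1 f i else (orientedChain L1 f i).swap := by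
  induction i with
  | zero => rfl
  | succ i ih =>
    rw [chain, ih]
    rcases Nat.mod_two_eq_zero_or_one i with h | h
    · rw [if_pos h, if_pos h, if_neg (by omega), pcomp_lowerT_s7]
      rfl
    · rw [if_neg (by omega), if_neg (by omega), if_pos (by omega), pcomp_upperT_s7]
      rfl

theorem chainInvariant_orientedChain {w : Fin 2 → ℕ} (hw : ∀ i, 0 < w i) {L1 : PolyMap}
    (hL1 : IsAffineAut L1) {f : ℕ → Polynomial ℂ} {l : ℕ}
    (hf : ∀ i, 1 ≤ i → i ≤ l → 1 < (f i).natDegree) {i : ℕ} (hi : 1 ≤ i) (hil : i ≤ l) :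
    ChainInvariant w (orientedChain L1 f i) := by
  induction i, hi using Nat.le_induction with
  | base => exact chainInvariant_affine hw hL1 (hf 1 le_rfl hil)
  | succ i hi ih => exact (ih (by omega)).step (hf (i + 1) (by omega) hil)

theorem weightedTotalDegree_aeval_chain {w : Fin 2 → ℕ} {L1 : PolyMap} {f : ℕ → Polynomial ℂ}
    {i : ℕ} (hpos : 0 < weightedTotalDegree w (orientedChain L1 f i).2)
    (hlt : weightedTotalDegree w (orientedChain L1 f i).2 <
      weightedTotalDegree w (orientedChain L1 f i).1)
    ⦃p : MvPolynomial (Fin 2) ℂ⦄ (hp : p.totalDegree = 1) :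
    weightedTotalDegree w (aeval ![(chain L1 f i).1, (chain L1 f i).2] p) =
        weightedTotalDegree w (orientedChain L1 f i).1 ∨
      weightedTotalDegree w (aeval ![(chain L1 f i).1, (chain L1 f i).2] p) =
        weightedTotalDegree w (orientedChain L1 f i).2 := by
  rw [chain_eq_orientedChain]
  split_ifs
  · exact weightedTotalDegree_aeval_of_totalDegree_eq_one hp (hpos.trans hlt) hpos hlt.ne'
  · exact (weightedTotalDegree_aeval_of_totalDegree_eq_one hp hpos (hpos.trans hlt) hlt.ne).symm

theorem bidegree_conditions_of_eq_mul_or_eq {w1 w2 v E n d1 d2 : ℕ} (hw1 : 0 < w1)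
    (hw1E : w1 ≤ E) (hw2E : w2 ≤ E) (hvE : v ∣ E) (hn : 0 < n) (hd1 : d1 = n * E ∨ d1 = E)
    (hd2 : d2 = n * E ∨ d2 = E) :
    v ∣ d1 ∧ v ∣ d2 ∧ 0 < d1 ∧ 0 < d2 ∧ max w1 w2 ≤ min d1 d2 ∧ (d1 ∣ d2 ∨ d2 ∣ d1) := by
  have hE : ∀ d, (d = n * E ∨ d = E) → E ∣ d ∧ E ≤ d := by
    rintro d (rfl | rfl)
    exacts [⟨dvd_mul_left _ _, Nat.le_mul_of_pos_left _ hn⟩, ⟨dvd_rfl, le_rfl⟩]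
  obtain ⟨hEd1, hEle1⟩ := hE d1 hd1
  obtain ⟨hEd2, hEle2⟩ := hE d2 hd2
  refine ⟨hvE.trans hEd1, hvE.trans hEd2, by omega, by omega, by omega, ?_⟩
  rcases hd1 with rfl | rfl <;> rcases hd2 with rfl | rfl
  exacts [Or.inl dvd_rfl, Or.inr hEd1, Or.inl hEd2, Or.inl dvd_rfl]

theorem wdeg_eq_weightedTotalDegree (w1 w2 : ℕ) (p : MvPolynomial (Fin 2) ℂ) :
    wdeg w1 w2 p = weightedTotalDegree ![w1, w2] p := by
  simp [wdeg, weightedTotalDegree, weight_apply, Finsupp.sum_fintype, Fin.sum_univ_two, mul_comm]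

theorem stmt_7_general (w1 w2 : ℕ) (hw1 : 0 < w1) (hw2 : 0 < w2) (F : PolyMap)
    (l : ℕ) (hl : 2 ≤ l) (L1 L2 : PolyMap) (hL1 : IsAffineAut L1) (hL2 : IsAffineAut L2)
    (f : ℕ → Polynomial ℂ) (hf : ∀ i, 1 ≤ i → i ≤ l → 1 < (f i).natDegree)
    (hF : F = pcomp L2 (chain L1 f l))
    (d1 d2 : ℕ) (hd1 : d1 = wdeg w1 w2 F.1) (hd2 : d2 = wdeg w1 w2 F.2) :
    (w1 ∣ d1 ∧ w1 ∣ d2 ∧ 0 < d1 ∧ 0 < d2 ∧ max w1 w2 ≤ min d1 d2 ∧ (d1 ∣ d2 ∨ d2 ∣ d1)) ∨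
    (w2 ∣ d1 ∧ w2 ∣ d2 ∧ 0 < d1 ∧ 0 < d2 ∧ max w1 w2 ≤ min d1 d2 ∧ (d1 ∣ d2 ∨ d2 ∣ d1)) := by
  have hw : ∀ i, 0 < ![w1, w2] i := fun i => by fin_cases i <;> assumption
  obtain ⟨m, rfl⟩ : ∃ m, l = m + 1 := ⟨l - 1, by omega⟩
  obtain ⟨hlt, hge, j, hj⟩ :=
    chainInvariant_orientedChain hw hL1 hf (i := m) (by omega) le_self_add
  have hn : 1 < (f (m + 1)).natDegree := hf (m + 1) (by omega) le_rfl
  have hlead := weightedTotalDegree_add_aeval_of_lt hlt (g := f (m + 1)) (by omega)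
  have hE : 0 < weightedTotalDegree ![w1, w2] (orientedChain L1 f m).1 := (hge 0).trans_lt' hw1
  have hdeg := weightedTotalDegree_aeval_chain (L1 := L1) (f := f) (i := m + 1) hE
    (by rw [orientedChain, hlead]; exact lt_mul_left hE hn)
  simp only [orientedChain, hlead] at hdeg
  set E := weightedTotalDegree ![w1, w2] (orientedChain L1 f m).1
  have hd1' : d1 = (f (m + 1)).natDegree * E ∨ d1 = E := by
    rw [hd1, wdeg_eq_weightedTotalDegree, hF]; exact hdeg hL2.2.1
  have hd2' : d2 = (f (m + 1)).natDegree * E ∨ d2 = E := by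
    rw [hd2, wdeg_eq_weightedTotalDegree, hF]; exact hdeg hL2.2.2
  fin_cases j
  · exact Or.inl (bidegree_conditions_of_eq_mul_or_eq hw1 (hge 0) (hge 1) hj (by omega) hd1' hd2')
  · exact Or.inr (bidegree_conditions_of_eq_mul_or_eq hw1 (hge 0) (hge 1) hj (by omega) hd1' hd2')

/-- Weighted bidegrees of automorphisms of length at least 2. -/
theorem stmt_7 (w1 w2 : ℕ) (hw1 : 0 < w1) (hw2 : 0 < w2) (F : PolyMap) (hAut : IsPolyAut F)
    (l : ℕ) (hl : 2 ≤ l) (L1 L2 : PolyMap) (hL1 : IsAffineAut L1) (hL2 : IsAffineAut L2)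
    (f : ℕ → Polynomial ℂ) (hf : ∀ i, 1 ≤ i → i ≤ l → 1 < (f i).natDegree)
    (hF : F = pcomp L2 (chain L1 f l))
    (d1 d2 : ℕ) (hd1 : d1 = wdeg w1 w2 F.1) (hd2 : d2 = wdeg w1 w2 F.2) :
    (w1 ∣ d1 ∧ w1 ∣ d2 ∧ 0 < d1 ∧ 0 < d2 ∧ max w1 w2 ≤ min d1 d2 ∧ (d1 ∣ d2 ∨ d2 ∣ d1)) ∨
    (w2 ∣ d1 ∧ w2 ∣ d2 ∧ 0 < d1 ∧ 0 < d2 ∧ max w1 w2 ≤ min d1 d2 ∧ (d1 ∣ d2 ∨ d2 ∣ d1)) :=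
  stmt_7_general w1 w2 hw1 hw2 F l hl L1 L2 hL1 hL2 f hf hF d1 d2 hd1 hd2
end

section
/- Let w = (w1, w2) ∈ ℕ₊² and let d1, d2 ∈ w1ℕ₊ with min{d1, d2} ≥ w2 ≥ w1 and d1 = d2. Let T1(x,y) = (x, y + x^{d1/w1}) and L(x,y) = (x + y, y). Then the polynomial automorphism F = L ∘ T1 of ℂ², i.e. F(x,y) = (x + y + x^{d1/w1}, y + x^{d1/w1}), has weighted bidegree (d1, d2), that is, deg_w F1 = deg_w F2 = d1. -/
open MvPolynomial

lemma wdeg_le_aux (w1 w2 d1 : ℕ) (hw : w1 ≤ d1) (hge : w2 ≤ d1) (k : ℕ)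
    (hk : k * w1 = d1) (p : MvPolynomial (Fin 2) ℂ)
    (hsup : p.support ⊆ {Finsupp.single 0 1, Finsupp.single 1 1, Finsupp.single 0 k}) :
    wdeg w1 w2 p ≤ d1 := by
  apply Finset.sup_le
  intro α hα
  have := hsup hα
  simp only [Finset.mem_insert, Finset.mem_singleton] at this
  rcases this with h | h | h <;> subst h <;> simp [Finsupp.single_apply, hw, hge, hk.le, hk]

lemma wdeg_ge_aux (w1 w2 d1 : ℕ) (k : ℕ) (hk : k * w1 = d1) (p : MvPolynomial (Fin 2) ℂ)
    (hmem : Finsupp.single (0 : Fin 2) k ∈ p.support) : d1 ≤ wdeg w1 w2 p := by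
  have := Finset.le_sup (f := fun α : Fin 2 →₀ ℕ => α 0 * w1 + α 1 * w2) hmem
  simpa [wdeg, Finsupp.single_apply, hk] using this

/-- For `d1 ∈ w1ℕ₊` with `d1 ≥ w2 ≥ w1`, the map
`F(x,y) = (x + y + x^{d1/w1}, y + x^{d1/w1})` satisfies `wdeg F1 = wdeg F2 = d1`. -/
theorem stmt_19 (w1 w2 : ℕ) (hw1 : 0 < w1) (hw2 : 0 < w2) (hw : w1 ≤ w2) (d1 : ℕ)
    (hdvd : w1 ∣ d1) (hpos : 0 < d1) (hge : w2 ≤ d1) :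
    wdeg w1 w2 (MvPolynomial.X 0 + MvPolynomial.X 1 + MvPolynomial.X 0 ^ (d1 / w1) :
      MvPolynomial (Fin 2) ℂ) = d1 ∧
    wdeg w1 w2 (MvPolynomial.X 1 + MvPolynomial.X 0 ^ (d1 / w1) :
      MvPolynomial (Fin 2) ℂ) = d1 := by
  set k := d1 / w1 with hkdef
  have hk : k * w1 = d1 := Nat.div_mul_cancel hdvd
  have hw1d : w1 ≤ d1 := hw.trans hge
  have hkpos : 0 < k := Nat.div_pos hw1d hw1
  have hne : Finsupp.single (0 : Fin 2) k ≠ Finsupp.single (1 : Fin 2) 1 := by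
    intro h
    have := DFunLike.congr_fun h 0
    simp [Finsupp.single_apply, hkpos.ne'] at this
  constructor
  · refine le_antisymm (wdeg_le_aux w1 w2 d1 hw1d hge k hk _ ?_) (wdeg_ge_aux w1 w2 d1 k hk _ ?_)
    · refine (MvPolynomial.support_add).trans ?_
      apply Finset.union_subset
      · refine (MvPolynomial.support_add).trans ?_
        apply Finset.union_subset <;>
          simp [MvPolynomial.support_X, Finset.insert_subset_iff]
      · simp [MvPolynomial.support_X_pow]
    · rw [MvPolynomial.mem_support_iff]
      simp only [MvPolynomial.coeff_add, MvPolynomial.coeff_X', MvPolynomial.coeff_X_pow]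
      rcases eq_or_ne k 1 with h1 | h1
      · have h10 : Finsupp.single (1 : Fin 2) 1 ≠ Finsupp.single (0 : Fin 2) 1 := by
          intro h
          have := DFunLike.congr_fun h 1
          simp [Finsupp.single_apply] at this
        norm_num [h1, h10]
      · have : Finsupp.single (0 : Fin 2) 1 ≠ Finsupp.single (0 : Fin 2) k := by
          intro h
          have := DFunLike.congr_fun h 0
          simp [Finsupp.single_apply] at this
          exact h1 this.symm
        simp [this, hne.symm]
  · refine le_antisymm (wdeg_le_aux w1 w2 d1 hw1d hge k hk _ ?_) (wdeg_ge_aux w1 w2 d1 k hk _ ?_)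
    · refine (MvPolynomial.support_add).trans ?_
      apply Finset.union_subset
      · simp [MvPolynomial.support_X, Finset.insert_subset_iff]
      · simp [MvPolynomial.support_X_pow]
    · rw [MvPolynomial.mem_support_iff]
      simp [MvPolynomial.coeff_X', MvPolynomial.coeff_X_pow, hne.symm]
end
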